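/- For any two density matrices ρ₁ and ρ₂ on ℂ^d, 1 − √F(ρ₁, ρ₂) ≤ (1/2)·‖ρ₁ − ρ₂‖₁ ≤ √(1 − F(ρ₁, ρ₂)). (Fuchs–van de Graaf inequalities relating fidelity and trace distance.) -/

import Mathlib

open Matrix BigOperators Kronecker
open scoped ComplexOrder

noncomputable section
open Classical

/-- The positive semidefinite square root of a matrix (junk value `0` if not PSD). -/
def msqrt {d : Type*} [Fintype d] [DecidableEq d] (A : Matrix d d ℂ) : Matrix d d ℂ :=
  if h : A.PosSemidef then
    (h.1.eigenvectorUnitary : Matrix d d ℂ) *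
      diagonal (((↑) : ℝ → ℂ) ∘ Real.sqrt ∘ h.1.eigenvalues) *
      (star h.1.eigenvectorUnitary : Matrix d d ℂ)
  else 0

/-- The trace norm `Tr √(AᴴA)` of a complex matrix. -/
def traceNorm {d : Type*} [Fintype d] [DecidableEq d] (A : Matrix d d ℂ) : ℝ :=
  ((msqrt (Aᴴ * A)).trace).re

/-- `ρ` is a density matrix: positive semidefinite with trace `1`. -/
def IsDensityMatrix {d : Type*} [Fintype d] [DecidableEq d] (ρ : Matrix d d ℂ) : Prop :=
  ρ.PosSemidef ∧ ρ.trace = 1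

/-- Von Neumann entropy, base 2 (junk value `0` if not Hermitian). -/
def vnEntropy {d : Type*} [Fintype d] [DecidableEq d] (ρ : Matrix d d ℂ) : ℝ :=
  if h : ρ.IsHermitian then -∑ i, (h.eigenvalues i) * Real.logb 2 (h.eigenvalues i) else 0

/-- The binary entropy function, base 2. -/
def binEntropy (p : ℝ) : ℝ := -p * Real.logb 2 p - (1 - p) * Real.logb 2 (1 - p)

/-- Fidelity of two matrices: `(Tr √(√ρ₁ ρ₂ √ρ₁))²`. -/
def fidelity {d : Type*} [Fintype d] [DecidableEq d] (ρ₁ ρ₂ : Matrix d d ℂ) : ℝ :=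
  (((msqrt (msqrt ρ₁ * ρ₂ * msqrt ρ₁)).trace).re) ^ 2

/-- Partial trace over the second tensor factor. -/
def ptraceSnd {m k : ℕ} (ρ : Matrix (Fin m × Fin k) (Fin m × Fin k) ℂ) :
    Matrix (Fin m) (Fin m) ℂ :=
  Matrix.of fun i j => ∑ l : Fin k, ρ (i, l) (j, l)

end

/-!
Write `A = √ρ₁` and `B = √ρ₂`. The polar decomposition `X = U |X|` shows that `‖X‖₁` is the
maximum of `Re Tr (W X)` over unitaries `W`; also `√F = ‖B A‖₁`, since `(B A)ᴴ (B A) = A ρ₂ A`.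

Lower bound (Powers–Størmer): for `G = A - B` with sign unitary `W`,
`Tr G² ≤ Tr (|G| (A + B)) = Re Tr (W (ρ₁ - ρ₂)) ≤ ‖ρ₁ - ρ₂‖₁`, where the first step holds because
`|G| (A + B) - G² = 2 (G⁺ B + G⁻ A)`; and `Tr G² = 2 - 2 Re Tr (A B) ≥ 2 - 2 √F`.

Upper bound (purification): with `U` from the polar decomposition of `B A`, the unit vectors
`u = vec A` and `w = vec (B U)` have partial traces `ρ₁` and `ρ₂` and overlap `⟨u, w⟩ = √F`.
The trace norm does not increase under the partial trace, and `‖u u* - w w*‖₁ = 2 √(1 - ⟨u, w⟩²)`.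
-/

open scoped MatrixOrder

theorem ContinuousLinearMap.norm_apply_eq_of_star_mul_self_eq {𝕜 H : Type*} [RCLike 𝕜]
    [NormedAddCommGroup H] [InnerProductSpace 𝕜 H] [CompleteSpace H] {a b : H →L[𝕜] H}
    (h : star a * a = star b * b) (v : H) : ‖a v‖ = ‖b v‖ := by
  rw [← sq_eq_sq₀ (norm_nonneg _) (norm_nonneg _), apply_norm_sq_eq_inner_adjoint_left,
    apply_norm_sq_eq_inner_adjoint_left, ← star_eq_adjoint, ← star_eq_adjoint, ← mul_def,
    ← mul_def, h]

theorem LinearMap.exists_linearIsometryEquiv_apply_eq_of_norm_eq {𝕜 H : Type*} [RCLike 𝕜]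
    [NormedAddCommGroup H] [InnerProductSpace 𝕜 H] [FiniteDimensional 𝕜 H]
    (S T : H →ₗ[𝕜] H) (hST : ∀ v, ‖T v‖ = ‖S v‖) :
    ∃ U : H ≃ₗᵢ[𝕜] H, ∀ v, U (S v) = T v := by
  have hker : LinearMap.ker S ≤ LinearMap.ker T := fun v hv => by
    rw [LinearMap.mem_ker, ← norm_eq_zero, hST, norm_eq_zero]; exact hv
  let L₀ : LinearMap.range S →ₗ[𝕜] H := (LinearMap.ker S).liftQ T hker ∘ₗ S.quotKerEquivRange.symm
  have hL₀ : ∀ v, L₀ ⟨S v, LinearMap.mem_range_self S v⟩ = T v := fun v => by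
    simp [L₀, LinearMap.quotKerEquivRange_symm_apply_image]
  let L : LinearMap.range S →ₗᵢ[𝕜] H :=
    { L₀ with
      norm_map' := by
        rintro ⟨_, v, rfl⟩
        exact (congrArg norm (hL₀ v)).trans (hST v) }
  refine ⟨L.extend.toLinearIsometryEquiv rfl, fun v => ?_⟩
  exact (L.extend_apply ⟨S v, LinearMap.mem_range_self S v⟩).trans (hL₀ v)

variable {n : Type*} [Fintype n]

lemma Matrix.PosSemidef.trace_eq_ofReal_re {A : Matrix n n ℂ} (hA : A.PosSemidef) :
    A.trace = (A.trace.re : ℂ) :=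
  Complex.eq_re_of_ofReal_le (by rw [Complex.ofReal_zero]; exact hA.trace_nonneg)

lemma trace_one_kronecker_mul_vecMulVec {m : Type*} [Fintype m] [DecidableEq m]
    (Λ : Matrix n n ℂ) (C E : Matrix n m ℂ) :
    ((1 ⊗ₖ Λ : Matrix (m × n) (m × n) ℂ) * vecMulVec (vec C) (star (vec E))).trace
      = (Λ * (C * Eᴴ)).trace := by
  rw [mul_vecMulVec, trace_vecMulVec, ← vec_mul_eq_mulVec, dotProduct_comm,
    star_vec_dotProduct_vec, trace_mul_comm, Matrix.mul_assoc]

variable [DecidableEq n]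

theorem Matrix.exists_unitary_eq_mul_abs (X : Matrix n n ℂ) :
    ∃ U ∈ unitaryGroup n ℂ, X = U * CFC.abs X := by
  let e : Matrix n n ℂ ≃⋆ₐ[ℂ] _ := Matrix.toEuclideanCLM (𝕜 := ℂ) (n := n)
  have hstar : star (e X) * e X = star (e (CFC.abs X)) * e (CFC.abs X) := by
    rw [← map_star, ← map_star, ← map_mul, ← map_mul, (CFC.abs_nonneg X).isSelfAdjoint.star_eq,
      CFC.abs_mul_abs]
  obtain ⟨U, hU⟩ := LinearMap.exists_linearIsometryEquiv_apply_eq_of_norm_eq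
    (e (CFC.abs X)).toLinearMap (e X).toLinearMap
    (ContinuousLinearMap.norm_apply_eq_of_star_mul_self_eq hstar)
  refine ⟨e.symm (Unitary.linearIsometryEquiv.symm U),
    Unitary.map_mem e.symm (SetLike.coe_mem _), ?_⟩
  apply EquivLike.injective e
  rw [map_mul, e.apply_symm_apply]
  ext1 v
  exact (hU v).symm

lemma Matrix.PosSemidef.re_trace_mul_nonneg {P Q : Matrix n n ℂ} (hP : P.PosSemidef)
    (hQ : Q.PosSemidef) : 0 ≤ (P * Q).trace.re := by
  set R := CFC.sqrt P
  have hR : Rᴴ = R := (CFC.sqrt_nonneg P).isSelfAdjoint.star_eq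
  have hRR : R * R = P := CFC.sqrt_mul_sqrt_self P hP.nonneg
  have hRQR := hQ.conjTranspose_mul_mul_same R
  rw [hR] at hRQR
  rw [← hRR, mul_assoc, trace_mul_comm, mul_assoc, ← mul_assoc]
  exact Complex.nonneg_iff.mp hRQR.trace_nonneg |>.1

lemma re_trace_unitary_mul_le_re_trace {V P : Matrix n n ℂ} (hV : V ∈ unitaryGroup n ℂ)
    (hP : P.PosSemidef) : (V * P).trace.re ≤ P.trace.re := by
  have hVV : Vᴴ * V = 1 := Unitary.star_mul_self_of_mem hV
  have hexpand : (1 - V)ᴴ * (1 - V) * P = P + P - V * P - Vᴴ * P := by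
    rw [conjTranspose_sub, conjTranspose_one]
    simp only [sub_mul, mul_sub, one_mul, mul_one, hVV]
    module
  have hstar : (Vᴴ * P).trace = star (V * P).trace := by
    rw [← trace_conjTranspose, conjTranspose_mul, hP.1.eq, trace_mul_comm]
  have h := (posSemidef_conjTranspose_mul_self (1 - V)).re_trace_mul_nonneg hP
  rw [hexpand, trace_sub, trace_sub, trace_add, hstar] at h
  simp only [Complex.sub_re, Complex.add_re, Complex.star_def, Complex.conj_re] at h
  linarith

lemma msqrt_eq_sqrt {A : Matrix n n ℂ} (hA : A.PosSemidef) : msqrt A = CFC.sqrt A := by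
  rw [msqrt, dif_pos hA, CFC.sqrt_eq_cfc, cfc_nnreal_eq_real _ A hA.nonneg, hA.1.cfc_eq]
  simp only [IsHermitian.cfc, Unitary.conjStarAlgAut_apply]
  congr 3
  funext i
  simp [Real.coe_sqrt, Real.coe_toNNReal', max_eq_left (hA.eigenvalues_nonneg i)]

lemma traceNorm_eq_re_trace_abs (X : Matrix n n ℂ) : traceNorm X = (CFC.abs X).trace.re := by
  rw [traceNorm, msqrt_eq_sqrt X.posSemidef_conjTranspose_mul_self]
  rfl

lemma trace_abs_eq_traceNorm (X : Matrix n n ℂ) : (CFC.abs X).trace = traceNorm X := by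
  rw [traceNorm_eq_re_trace_abs]
  exact (CFC.abs_nonneg X).posSemidef.trace_eq_ofReal_re

lemma traceNorm_nonneg (X : Matrix n n ℂ) : 0 ≤ traceNorm X := by
  rw [traceNorm_eq_re_trace_abs]
  exact Complex.nonneg_iff.mp (CFC.abs_nonneg X).posSemidef.trace_nonneg |>.1

lemma re_trace_unitary_mul_le_traceNorm {W : Matrix n n ℂ} (hW : W ∈ unitaryGroup n ℂ)
    (X : Matrix n n ℂ) : (W * X).trace.re ≤ traceNorm X := by
  obtain ⟨U, hU, hX⟩ := X.exists_unitary_eq_mul_abs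
  rw [traceNorm_eq_re_trace_abs]
  nth_rewrite 1 [hX]
  rw [← mul_assoc]
  exact re_trace_unitary_mul_le_re_trace (mul_mem hW hU) (CFC.abs_nonneg X).posSemidef

lemma exists_unitary_trace_mul_eq_traceNorm (X : Matrix n n ℂ) :
    ∃ W ∈ unitaryGroup n ℂ, (W * X).trace = traceNorm X := by
  obtain ⟨U, hU, hX⟩ := X.exists_unitary_eq_mul_abs
  refine ⟨star U, Unitary.star_mem hU, ?_⟩
  nth_rewrite 1 [hX]
  rw [← mul_assoc, Unitary.star_mul_self_of_mem hU, one_mul, trace_abs_eq_traceNorm]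

lemma Matrix.IsHermitian.traceNorm_eq_of_mul_mul_self_eq_smul {H : Matrix n n ℂ}
    (hH : H.IsHermitian) {c : ℝ} (hc : 0 < c) (hcube : H * H * H = c ^ 2 • H) :
    traceNorm H = (H * H).trace.re / c := by
  have hsq : (H * H).PosSemidef := by
    simpa [hH.eq] using posSemidef_conjTranspose_mul_self H
  have habs : CFC.abs H = c⁻¹ • (H * H) := by
    rw [CFC.abs, CFC.sqrt_eq_iff _ _ (star_mul_self_nonneg H)
      (hsq.smul (inv_nonneg.mpr hc.le)).nonneg, smul_mul_smul_comm, ← mul_assoc, hcube,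
      smul_mul_assoc, smul_smul, star_eq_conjTranspose, hH.eq]
    field_simp
    rw [one_smul]
  rw [traceNorm_eq_re_trace_abs, habs, trace_smul, Complex.smul_re, smul_eq_mul, div_eq_inv_mul]

lemma Matrix.IsHermitian.exists_unitary_mul_eq_abs {G : Matrix n n ℂ} (hG : G.IsHermitian) :
    ∃ W ∈ unitaryGroup n ℂ, W * G = CFC.abs G ∧ G * W = CFC.abs G := by
  have hcont (f : ℝ → ℝ) : ContinuousOn f (spectrum ℝ G) := G.finite_real_spectrum.continuousOn f
  let sgn : ℝ → ℝ := fun x => if 0 ≤ x then 1 else -1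
  have hsign (x : ℝ) : sgn x * x = ‖x‖ := by
    by_cases hx : 0 ≤ x <;> simp [sgn, hx, abs_of_nonneg, abs_of_neg, not_le.mp]
  have hWW : cfc sgn G * cfc sgn G = 1 := by
    rw [← cfc_mul _ _ G (hcont _) (hcont _), ← cfc_one ℝ G]
    exact cfc_congr fun x _ => by by_cases hx : 0 ≤ x <;> simp [sgn, hx]
  have hWG : cfc sgn G * G = CFC.abs G := by
    nth_rewrite 2 [← cfc_id' ℝ G]
    rw [← cfc_mul _ _ G (hcont _) (hcont _), CFC.abs_eq_cfc_norm G hG]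
    exact cfc_congr fun x _ => hsign x
  have hGW : G * cfc sgn G = CFC.abs G := by
    nth_rewrite 1 [← cfc_id' ℝ G]
    rw [← cfc_mul _ _ G (hcont _) (hcont _), CFC.abs_eq_cfc_norm G hG]
    exact cfc_congr fun x _ => (mul_comm _ _).trans (hsign x)
  refine ⟨cfc sgn G, ?_, hWG, hGW⟩
  rw [unitaryGroup, Unitary.mem_iff, (cfc_predicate sgn G).star_eq]
  exact ⟨hWW, hWW⟩

lemma re_trace_sub_mul_sub_le_re_trace_abs_mul_add {A B : Matrix n n ℂ} (hA : A.PosSemidef)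
    (hB : B.PosSemidef) :
    ((A - B) * (A - B)).trace.re ≤ (CFC.abs (A - B) * (A + B)).trace.re := by
  have hG : IsSelfAdjoint (A - B) := hA.1.sub hB.1
  set p := (A - B)⁺
  set q := (A - B)⁻
  have hpq : p * q = 0 := CFC.posPart_mul_negPart _
  have hqp : q * p = 0 := CFC.negPart_mul_posPart _
  have hA' : A = B + (p - q) := by rw [CFC.posPart_sub_negPart _ hG]; abel
  have key : CFC.abs (A - B) * (A + B) = (A - B) * (A - B) + (2 : ℝ) • (p * B + q * A) := by
    have habs : CFC.abs (A - B) = p + q := (CFC.posPart_add_negPart _ hG).symm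
    rw [habs, hA', add_sub_cancel_left]
    simp only [mul_add, add_mul, mul_sub, sub_mul, hpq, hqp]
    module
  rw [key, trace_add, Complex.add_re, trace_smul, Complex.smul_re, trace_add, Complex.add_re,
    le_add_iff_nonneg_right]
  have hp : p.PosSemidef := (CFC.posPart_nonneg _).posSemidef
  have hq : q.PosSemidef := (CFC.negPart_nonneg _).posSemidef
  exact mul_nonneg zero_le_two (add_nonneg (hp.re_trace_mul_nonneg hB) (hq.re_trace_mul_nonneg hA))

lemma re_trace_sub_mul_sub_le_traceNorm {A B : Matrix n n ℂ} (hA : A.PosSemidef)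
    (hB : B.PosSemidef) : ((A - B) * (A - B)).trace.re ≤ traceNorm (A * A - B * B) := by
  obtain ⟨W, hW, hWG, hGW⟩ := (hA.1.sub hB.1).exists_unitary_mul_eq_abs
  have hsym : A * A - B * B = (2 : ℂ)⁻¹ • ((A - B) * (A + B) + (A + B) * (A - B)) := by
    simp only [mul_add, add_mul, mul_sub, sub_mul]
    module
  have htrace : (W * (A * A - B * B)).trace = (CFC.abs (A - B) * (A + B)).trace := by
    have h₁ : (W * ((A - B) * (A + B))).trace = (CFC.abs (A - B) * (A + B)).trace := by
      rw [← mul_assoc, hWG]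
    have h₂ : (W * ((A + B) * (A - B))).trace = (CFC.abs (A - B) * (A + B)).trace := by
      rw [trace_mul_comm, mul_assoc, hGW, trace_mul_comm]
    rw [hsym, mul_smul_comm, trace_smul, mul_add, trace_add, h₁, h₂, smul_eq_mul, ← two_mul,
      inv_mul_cancel_left₀ two_ne_zero]
  calc ((A - B) * (A - B)).trace.re ≤ (CFC.abs (A - B) * (A + B)).trace.re :=
        re_trace_sub_mul_sub_le_re_trace_abs_mul_add hA hB
    _ = (W * (A * A - B * B)).trace.re := by rw [htrace]
    _ ≤ traceNorm (A * A - B * B) := re_trace_unitary_mul_le_traceNorm hW _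

lemma traceNorm_vecMulVec_sub_vecMulVec {ι : Type*} [Fintype ι] [DecidableEq ι] {u w : ι → ℂ}
    (hu : star u ⬝ᵥ u = 1) (hw : star w ⬝ᵥ w = 1) {t : ℝ} (ht : star u ⬝ᵥ w = t) :
    traceNorm (vecMulVec u (star u) - vecMulVec w (star w)) = 2 * Real.sqrt (1 - t ^ 2) := by
  have hwu : star w ⬝ᵥ u = t := by rw [star_dotProduct, ht, Complex.star_def, Complex.conj_ofReal]
  set H := vecMulVec u (star u) - vecMulVec w (star w)
  have hH : H.IsHermitian := by
    simp only [H, IsHermitian, conjTranspose_sub, conjTranspose_vecMulVec, star_star]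
  have hsq : H * H = vecMulVec u (star u) + vecMulVec w (star w)
      - (t : ℂ) • vecMulVec u (star w) - (t : ℂ) • vecMulVec w (star u) := by
    simp only [H, sub_mul, mul_sub, vecMulVec_mul_vecMulVec, hu, hw, ht, hwu, one_smul,
      vecMulVec_smul]
    module
  have hcube : H * H * H = (1 - t ^ 2) • H := by
    rw [hsq]
    simp only [H, sub_mul, add_mul, mul_sub, smul_mul_assoc, vecMulVec_mul_vecMulVec, hu, hw, ht,
      hwu, one_smul, vecMulVec_smul, smul_sub]
    module
  have htr : (H * H).trace.re = 2 * (1 - t ^ 2) := by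
    rw [hsq]
    simp only [trace_sub, trace_add, trace_smul, trace_vecMulVec, dotProduct_comm _ (star _), hu,
      hw, ht, hwu, smul_eq_mul, Complex.sub_re, Complex.add_re, Complex.one_re,
      Complex.re_ofReal_mul, Complex.ofReal_re]
    ring
  rcases le_or_gt (1 - t ^ 2) 0 with hle | hpos
  · have hzero : H = 0 := by
      have hHH := posSemidef_conjTranspose_mul_self H
      have hre := (Complex.nonneg_iff.mp hHH.trace_nonneg).1
      rw [← trace_conjTranspose_mul_self_eq_zero_iff, hHH.trace_eq_ofReal_re]
      rw [hH.eq, htr] at hre ⊢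
      exact_mod_cast (by linarith : 2 * (1 - t ^ 2) = 0)
    rw [hzero, Real.sqrt_eq_zero'.mpr hle, traceNorm_eq_re_trace_abs, CFC.abs_zero, trace_zero]
    simp
  · have hc := Real.sqrt_pos.mpr hpos
    rw [hH.traceNorm_eq_of_mul_mul_self_eq_smul hc (by rwa [Real.sq_sqrt hpos.le]), htr]
    nth_rewrite 1 [← Real.sq_sqrt hpos.le]
    field_simp

-- `vec C` purifies `C * Cᴴ`: this is the monotonicity of the trace norm under the partial trace.
lemma traceNorm_mul_conjTranspose_sub_le {m : Type*} [Fintype m] [DecidableEq m]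
    (C E : Matrix n m ℂ) :
    traceNorm (C * Cᴴ - E * Eᴴ)
      ≤ traceNorm (vecMulVec (vec C) (star (vec C)) - vecMulVec (vec E) (star (vec E))) := by
  obtain ⟨Λ, hΛ, htr⟩ := exists_unitary_trace_mul_eq_traceNorm (C * Cᴴ - E * Eᴴ)
  calc traceNorm (C * Cᴴ - E * Eᴴ)
      = ((1 ⊗ₖ Λ) * (vecMulVec (vec C) (star (vec C))
          - vecMulVec (vec E) (star (vec E)))).trace.re := by
        rw [mul_sub, trace_sub, trace_one_kronecker_mul_vecMulVec,
          trace_one_kronecker_mul_vecMulVec, ← trace_sub, ← mul_sub, htr, Complex.ofReal_re]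
    _ ≤ _ := re_trace_unitary_mul_le_traceNorm (kronecker_mem_unitary (one_mem _) hΛ) _

lemma sqrt_fidelity_eq_traceNorm {ρ σ : Matrix n n ℂ} (hρ : ρ.PosSemidef) (hσ : σ.PosSemidef) :
    Real.sqrt (fidelity ρ σ) = traceNorm (CFC.sqrt σ * CFC.sqrt ρ) := by
  have hconj : (CFC.sqrt σ * CFC.sqrt ρ)ᴴ * (CFC.sqrt σ * CFC.sqrt ρ)
      = CFC.sqrt ρ * σ * CFC.sqrt ρ := by
    rw [conjTranspose_mul, (CFC.sqrt_nonneg ρ).posSemidef.1.eq,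
      (CFC.sqrt_nonneg σ).posSemidef.1.eq, mul_assoc, ← mul_assoc (CFC.sqrt σ),
      CFC.sqrt_mul_sqrt_self σ hσ.nonneg, mul_assoc]
  have h : traceNorm (CFC.sqrt σ * CFC.sqrt ρ)
      = (msqrt (CFC.sqrt ρ * σ * CFC.sqrt ρ)).trace.re := by
    rw [traceNorm, hconj]
  rw [fidelity, msqrt_eq_sqrt hρ, ← h, Real.sqrt_sq (traceNorm_nonneg _)]

theorem one_sub_sqrt_fidelity_le {ρ σ : Matrix n n ℂ} (hρ : IsDensityMatrix ρ)
    (hσ : IsDensityMatrix σ) : 1 - Real.sqrt (fidelity ρ σ) ≤ 1 / 2 * traceNorm (ρ - σ) := by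
  set A := CFC.sqrt ρ
  set B := CFC.sqrt σ
  have hAA : A * A = ρ := CFC.sqrt_mul_sqrt_self ρ hρ.1.nonneg
  have hBB : B * B = σ := CFC.sqrt_mul_sqrt_self σ hσ.1.nonneg
  have hPS := re_trace_sub_mul_sub_le_traceNorm (CFC.sqrt_nonneg ρ).posSemidef
    (CFC.sqrt_nonneg σ).posSemidef
  have hexpand : ((A - B) * (A - B)).trace.re = 2 - 2 * (B * A).trace.re := by
    rw [sub_mul, mul_sub, mul_sub, hAA, hBB, trace_sub, trace_sub, trace_sub, trace_mul_comm A B,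
      hρ.2, hσ.2]
    simp only [Complex.sub_re, Complex.one_re]
    ring
  have hBA : (B * A).trace.re ≤ Real.sqrt (fidelity ρ σ) := by
    rw [sqrt_fidelity_eq_traceNorm hρ.1 hσ.1]
    simpa using re_trace_unitary_mul_le_traceNorm (one_mem _) (B * A)
  rw [hAA, hBB] at hPS
  linarith

theorem half_traceNorm_le_sqrt_one_sub_fidelity {ρ σ : Matrix n n ℂ} (hρ : IsDensityMatrix ρ)
    (hσ : IsDensityMatrix σ) : 1 / 2 * traceNorm (ρ - σ) ≤ Real.sqrt (1 - fidelity ρ σ) := by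
  set A := CFC.sqrt ρ
  set B := CFC.sqrt σ
  have hA : Aᴴ = A := (CFC.sqrt_nonneg ρ).posSemidef.1.eq
  have hB : Bᴴ = B := (CFC.sqrt_nonneg σ).posSemidef.1.eq
  have hAA : A * A = ρ := CFC.sqrt_mul_sqrt_self ρ hρ.1.nonneg
  have hBB : B * B = σ := CFC.sqrt_mul_sqrt_self σ hσ.1.nonneg
  obtain ⟨U, hU, hBA⟩ := (B * A).exists_unitary_eq_mul_abs
  have hUU : Uᴴ * U = 1 := Unitary.star_mul_self_of_mem hU
  have hUU' : U * Uᴴ = 1 := Unitary.mul_star_self_of_mem hU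
  have hF : fidelity ρ σ = traceNorm (B * A) ^ 2 := by
    rw [← sqrt_fidelity_eq_traceNorm hρ.1 hσ.1]
    exact (Real.sq_sqrt (sq_nonneg _)).symm
  have hAB : A * B = CFC.abs (B * A) * Uᴴ := by
    have h := congrArg conjTranspose hBA
    rwa [conjTranspose_mul, conjTranspose_mul, hA, hB,
      (CFC.abs_nonneg (B * A)).posSemidef.1.eq] at h
  have hEE : B * U * (B * U)ᴴ = σ := by
    rw [conjTranspose_mul, hB, mul_assoc, ← mul_assoc U, hUU', one_mul, hBB]
  have hu : star (vec A) ⬝ᵥ vec A = 1 := by rw [star_vec_dotProduct_vec, hA, hAA, hρ.2]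
  have hw : star (vec (B * U)) ⬝ᵥ vec (B * U) = 1 := by
    rw [star_vec_dotProduct_vec, trace_mul_comm, hEE, hσ.2]
  have ht : star (vec A) ⬝ᵥ vec (B * U) = traceNorm (B * A) := by
    rw [star_vec_dotProduct_vec, hA, ← mul_assoc, hAB, mul_assoc, hUU, mul_one,
      trace_abs_eq_traceNorm]
  have hmono := traceNorm_mul_conjTranspose_sub_le A (B * U)
  rw [hA, hAA, hEE, traceNorm_vecMulVec_sub_vecMulVec hu hw ht] at hmono
  rw [hF]
  linarith

/-- **Fuchs–van de Graaf inequalities** relating fidelity and trace distance. -/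
theorem fuchs_van_de_graaf (d : ℕ) (ρ₁ ρ₂ : Matrix (Fin d) (Fin d) ℂ)
    (h₁ : IsDensityMatrix ρ₁) (h₂ : IsDensityMatrix ρ₂) :
    1 - Real.sqrt (fidelity ρ₁ ρ₂) ≤ (1 / 2) * traceNorm (ρ₁ - ρ₂) ∧
    (1 / 2) * traceNorm (ρ₁ - ρ₂) ≤ Real.sqrt (1 - fidelity ρ₁ ρ₂) :=
  ⟨one_sub_sqrt_fidelity_le h₁ h₂, half_traceNorm_le_sqrt_one_sub_fidelity h₁ h₂⟩
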